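/- The conjugation map on extended fighting fish, sending a word F over {E,N,W,S,V} to the word obtained by reversing F and applying the letter substitution E↔S, N↔W, V↦V, is an involution of the set of extended fighting fish that preserves both size and area. -/
import Mathlib


/-- The alphabet of (extended) fighting fish: `E`, `N`, `W`, `S` encode the four
kinds of free edges (steps East, North, West, South), and `V` encodes a
triangle (a replaced `WN` factor). -/
inductive FLetter where
  | E : FLetter
  | N : FLetter
  | W : FLetter
  | S : FLetter
  | V : FLetter
deriving DecidableEq, Repr

open FLetter

/-- Fighting fish: words over `{E,N,W,S}` obtainable from `ENWS` by the
rewriting rules `W → NWS` (upper gluing), `N → ENW` (lower gluing) and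
`WN → NW` (double gluing). -/
inductive IsFish : List FLetter → Prop
  | base : IsFish [E, N, W, S]
  | upper (A B : List FLetter) : IsFish (A ++ [W] ++ B) → IsFish (A ++ [N, W, S] ++ B)
  | lower (A B : List FLetter) : IsFish (A ++ [N] ++ B) → IsFish (A ++ [E, N, W] ++ B)
  | double (A B : List FLetter) : IsFish (A ++ [W, N] ++ B) → IsFish (A ++ [N, W] ++ B)

/-- `VRepl f w` holds iff `w` is obtained from `f` by replacing some
occurrences of the factor `WN` by the letter `V`. -/
inductive VRepl : List FLetter → List FLetter → Prop
  | refl (w : List FLetter) : VRepl w w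
  | step (A B w : List FLetter) : VRepl w (A ++ [W, N] ++ B) → VRepl w (A ++ [V] ++ B)

/-- Extended fighting fish: words obtained from a fighting fish by replacing a
set of occurrences of the factor `WN` by the letter `V`. -/
def IsEFish (w : List FLetter) : Prop := ∃ f, IsFish f ∧ VRepl f w

/-- The empty fish `ε = EVS`. -/
def eps : List FLetter := [E, V, S]

/-- Extended fighting fish together with the empty fish `ε`. -/
def IsEF (w : List FLetter) : Prop := IsEFish w ∨ w = eps

/-- Jaw length: number of initial `E` letters (the empty fish has jaw length 0). -/
def jaw (w : List FLetter) : ℕ :=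
  if w = eps then 0 else (w.takeWhile (fun x => x == E)).length

/-- Size of an extended fighting fish: `|F|_E + |F|_N - 1`. -/
def fsize (w : List FLetter) : ℕ := w.count E + w.count N - 1

/-- Latitude `|w|_N - |w|_S + |w|_V` of the endpoint of the walk of `w`. -/
def lat (w : List FLetter) : ℤ := (w.count N : ℤ) - w.count S + w.count V

/-- Longitude `|w|_E - |w|_W - |w|_V` of the endpoint of the walk of `w`. -/
def long (w : List FLetter) : ℤ := (w.count E : ℤ) - w.count W - w.count V

/-- Area of an extended fighting fish (shoelace-type formula):
`area(F) = Σ_i (lat(F^{≤i}) - lat(F^{≤i-1})) · long(F^{≤i})`. -/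
def area (w : List FLetter) : ℤ :=
  ∑ i ∈ Finset.range w.length,
    (lat (w.take (i + 1)) - lat (w.take i)) * long (w.take (i + 1))

/-- Concatenation `F1 ⊙ F2`: writing `F1 = G1 S` and `F2 = E^{jaw(F2)} N G2`,
it is `E^{jaw(F2)} G1 G2`, with `ε` acting as a two-sided identity. -/
def fconcat (F1 F2 : List FLetter) : List FLetter :=
  if F1 = eps then F2
  else if F2 = eps then F1
  else List.replicate (jaw F2) E ++ F1.dropLast ++ F2.drop (jaw F2 + 1)

/-- `i`-augmentation `✠_i(F)`: writing `F = E^{jaw(F)} N G`, it is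
`E^i N E^{jaw(F)-i} N G S` for `1 ≤ i ≤ jaw(F)` and `E^{jaw(F)+1} V G S` for
`i = jaw(F)+1`; also `✠_1(ε) = ENWS`. -/
def augment (i : ℕ) (F : List FLetter) : List FLetter :=
  if F = eps then [E, N, W, S]
  else if i ≤ jaw F then
    List.replicate i E ++ [N] ++ List.replicate (jaw F - i) E ++ [N]
      ++ F.drop (jaw F + 1) ++ [S]
  else
    List.replicate (jaw F + 1) E ++ [V] ++ F.drop (jaw F + 1) ++ [S]

/-- Low composition `⊕(F1^{•i}, F2) = ✠_i(F1) ⊙ F2`. -/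
def lowComp (i : ℕ) (F1 F2 : List FLetter) : List FLetter :=
  fconcat (augment i F1) F2

/-- The letter substitution `E ↔ S`, `N ↔ W`, `V ↦ V`. -/
def swapLetter : FLetter → FLetter
  | E => S
  | S => E
  | N => W
  | W => N
  | V => V

/-- Conjugation of extended fighting fish: reverse the word and apply the
letter substitution `E ↔ S`, `N ↔ W`, `V ↦ V`. -/
def conjFish (w : List FLetter) : List FLetter := (w.map swapLetter).reverse


section ConjAux

open List Finset

lemma swap_invol : Function.Involutive swapLetter := by
  intro x; cases x <;> rfl

lemma conjFish_conjFish (w : List FLetter) : conjFish (conjFish w) = w := by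
  simp [conjFish, List.map_reverse, List.map_map, swap_invol.comp_self]

lemma conjFish_append (a b : List FLetter) :
    conjFish (a ++ b) = conjFish b ++ conjFish a := by
  simp [conjFish]

lemma conj3 (A X B : List FLetter) :
    conjFish (A ++ X ++ B) = conjFish B ++ conjFish X ++ conjFish A := by
  simp [conjFish_append, List.append_assoc]

lemma IsFish.conj {f : List FLetter} (hf : IsFish f) : IsFish (conjFish f) := by
  induction hf with
  | base => exact IsFish.base
  | upper A B h ih =>
      rw [conj3] at ih ⊢
      exact IsFish.lower _ _ ih
  | lower A B h ih =>
      rw [conj3] at ih ⊢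
      exact IsFish.upper _ _ ih
  | double A B h ih =>
      rw [conj3] at ih ⊢
      exact IsFish.double _ _ ih

lemma VRepl.conj {f w : List FLetter} (h : VRepl f w) :
    VRepl (conjFish f) (conjFish w) := by
  induction h with
  | refl w => exact VRepl.refl _
  | step A B w h ih =>
      rw [conj3] at ih ⊢
      exact VRepl.step _ _ _ ih

lemma IsEFish.conj {w : List FLetter} (hw : IsEFish w) : IsEFish (conjFish w) := by
  obtain ⟨f, hf, hv⟩ := hw
  exact ⟨conjFish f, hf.conj, hv.conj⟩

lemma lat_append (a b : List FLetter) : lat (a ++ b) = lat a + lat b := by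
  simp only [lat, List.count_append]
  push_cast; ring

lemma long_append (a b : List FLetter) : long (a ++ b) = long a + long b := by
  simp only [long, List.count_append]
  push_cast; ring

lemma IsFish.lat_long {f : List FLetter} (hf : IsFish f) : lat f = 0 ∧ long f = 0 := by
  induction hf with
  | base => constructor <;> decide
  | upper A B h ih =>
      simp only [lat_append, long_append] at ih ⊢
      constructor <;> [have := ih.1; have := ih.2] <;>
        simp only [show lat [N,W,S] = 0 from by decide, show lat [W] = 0 from by decide,
          show long [N,W,S] = -1 from by decide, show long [W] = -1 from by decide] at * <;>
        linarith
  | lower A B h ih =>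
      simp only [lat_append, long_append] at ih ⊢
      constructor <;> [have := ih.1; have := ih.2] <;>
        simp only [show lat [E,N,W] = 1 from by decide, show lat [N] = 1 from by decide,
          show long [E,N,W] = 0 from by decide, show long [N] = 0 from by decide] at * <;>
        linarith
  | double A B h ih =>
      simp only [lat_append, long_append] at ih ⊢
      constructor <;> [have := ih.1; have := ih.2] <;>
        simp only [show lat [N,W] = lat [W,N] from by decide,
          show long [N,W] = long [W,N] from by decide] at * <;>
        linarith

lemma VRepl.lat_long {f w : List FLetter} (h : VRepl f w) :
    lat w = lat f ∧ long w = long f := by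
  induction h with
  | refl w => exact ⟨rfl, rfl⟩
  | step A B w h ih =>
      simp only [lat_append, long_append] at ih ⊢
      constructor <;> [have := ih.1; have := ih.2] <;>
        simp only [show lat [V] = lat [W,N] from by decide,
          show long [V] = long [W,N] from by decide] at * <;>
        linarith

lemma IsEFish.lat_long {w : List FLetter} (hw : IsEFish w) : lat w = 0 ∧ long w = 0 := by
  obtain ⟨f, hf, hv⟩ := hw
  obtain ⟨h1, h2⟩ := hf.lat_long
  obtain ⟨h3, h4⟩ := hv.lat_long
  exact ⟨h3.trans h1, h4.trans h2⟩

lemma count_conj (a : FLetter) (w : List FLetter) :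
    (conjFish w).count (swapLetter a) = w.count a := by
  simp only [conjFish, List.count_reverse]
  exact List.count_map_of_injective w swapLetter swap_invol.injective a

lemma fsize_conj {w : List FLetter} (h1 : lat w = 0) (h2 : long w = 0) :
    fsize (conjFish w) = fsize w := by
  have hE : (conjFish w).count E = w.count S := count_conj S w
  have hN : (conjFish w).count N = w.count W := count_conj W w
  simp only [lat, long] at h1 h2
  simp only [fsize, hE, hN]
  omega

lemma lat_map_swap (w : List FLetter) : lat (w.map swapLetter) = - long w := by
  have hN := List.count_map_of_injective w swapLetter swap_invol.injective W
  have hS := List.count_map_of_injective w swapLetter swap_invol.injective E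
  have hV := List.count_map_of_injective w swapLetter swap_invol.injective V
  simp only [swapLetter] at hN hS hV
  simp only [lat, long, hN, hS, hV]
  ring

lemma long_map_swap (w : List FLetter) : long (w.map swapLetter) = - lat w := by
  have hE := List.count_map_of_injective w swapLetter swap_invol.injective S
  have hW := List.count_map_of_injective w swapLetter swap_invol.injective N
  have hV := List.count_map_of_injective w swapLetter swap_invol.injective V
  simp only [swapLetter] at hE hW hV
  simp only [lat, long, hE, hW, hV]
  ring

lemma lat_conj (w : List FLetter) : lat (conjFish w) = - long w := by
  simp only [conjFish, lat, List.count_reverse, ← lat_map_swap]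

lemma long_conj (w : List FLetter) : long (conjFish w) = - lat w := by
  simp only [conjFish, long, List.count_reverse, ← long_map_swap]

lemma take_conj {w : List FLetter} {k : ℕ} (hk : k ≤ w.length) :
    (conjFish w).take k = conjFish (w.drop (w.length - k)) := by
  simp only [conjFish, List.map_drop, List.reverse_drop, List.length_map]
  congr 1
  omega

lemma long_drop (w : List FLetter) (j : ℕ) :
    long (w.drop j) = long w - long (w.take j) := by
  have := long_append (w.take j) (w.drop j)
  rw [List.take_append_drop] at this
  linarith

lemma lat_drop (w : List FLetter) (j : ℕ) :
    lat (w.drop j) = lat w - lat (w.take j) := by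
  have := lat_append (w.take j) (w.drop j)
  rw [List.take_append_drop] at this
  linarith

lemma lat_take_conj {w : List FLetter} {k : ℕ} (hk : k ≤ w.length) (h2 : long w = 0) :
    lat ((conjFish w).take k) = long (w.take (w.length - k)) := by
  rw [take_conj hk, lat_conj, long_drop, h2]
  ring

lemma long_take_conj {w : List FLetter} {k : ℕ} (hk : k ≤ w.length) (h1 : lat w = 0) :
    long ((conjFish w).take k) = lat (w.take (w.length - k)) := by
  rw [take_conj hk, long_conj, lat_drop, h1]
  ring

lemma shoelace (w : List FLetter) :
    area w + ∑ i ∈ Finset.range w.length,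
      (long (w.take (i+1)) - long (w.take i)) * lat (w.take i) = lat w * long w := by
  unfold area
  rw [← Finset.sum_add_distrib]
  have h : ∀ i ∈ Finset.range w.length,
      (lat (w.take (i+1)) - lat (w.take i)) * long (w.take (i+1))
        + (long (w.take (i+1)) - long (w.take i)) * lat (w.take i)
      = (fun j => lat (w.take j) * long (w.take j)) (i+1)
        - (fun j => lat (w.take j) * long (w.take j)) i := by
    intro i _
    simp only
    ring
  rw [Finset.sum_congr rfl h, Finset.sum_range_sub (fun j => lat (w.take j) * long (w.take j)) w.length]
  simp [List.take_length, lat]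

lemma area_conj {w : List FLetter} (h1 : lat w = 0) (h2 : long w = 0) :
    area (conjFish w) = area w := by
  have hlen : (conjFish w).length = w.length := by simp [conjFish]
  have key : area (conjFish w) = ∑ k ∈ Finset.range w.length,
      (fun j => (long (w.take j) - long (w.take (j+1))) * lat (w.take j))
        (w.length - 1 - k) := by
    unfold area
    rw [hlen]
    refine Finset.sum_congr rfl fun k hk => ?_
    have hk' := Finset.mem_range.mp hk
    rw [lat_take_conj (by omega) h2, lat_take_conj (by omega) h2,
      long_take_conj (by omega) h1]
    simp only
    rw [show w.length - (k+1) = w.length - 1 - k from by omega,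
      show w.length - 1 - k + 1 = w.length - k from by omega]
  rw [key, Finset.sum_range_reflect (fun j => (long (w.take j) - long (w.take (j+1))) * lat (w.take j)) w.length]
  have hs := shoelace w
  rw [h1, zero_mul] at hs
  have flip : ∑ j ∈ Finset.range w.length,
      (long (w.take j) - long (w.take (j+1))) * lat (w.take j)
      = - ∑ j ∈ Finset.range w.length,
          (long (w.take (j+1)) - long (w.take j)) * lat (w.take j) := by
    rw [← Finset.sum_neg_distrib]
    exact Finset.sum_congr rfl fun i _ => by ring
  rw [flip]
  linarith

end ConjAux

/-- Conjugation is an involution of the set of extended fighting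
fish that preserves both size and area. -/
theorem conjFish_involution (w : List FLetter) (hw : IsEFish w) :
    IsEFish (conjFish w) ∧ conjFish (conjFish w) = w ∧
    fsize (conjFish w) = fsize w ∧ area (conjFish w) = area w := by
  obtain ⟨h1, h2⟩ := hw.lat_long
  exact ⟨hw.conj, conjFish_conjFish w, fsize_conj h1 h2, area_conj h1 h2⟩
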